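/- arXiv:1802.03923 — 2 statements merged into one kernel-verified Lean document; each statement's English description precedes it below -/
import Mathlib

section
/- (Regularization Path Bound, RPB) Fix γ ∈ (0,1], a finite index set T, and symmetric matrices H_t ∈ ℝ^{d×d} (t ∈ T). Let λ₀, λ₁ > 0, let M₀* be optimal for λ₀ and M₁* be optimal for λ₁ (i.e., M_i* ⪰ O minimizes P_{λᵢ} over positive semi-definite matrices). Then ‖M₁* − ((λ₀+λ₁)/(2λ₁))·M₀*‖_F ≤ (|λ₀−λ₁|/(2λ₁))·‖M₀*‖_F. -/
/-!
The loss part `L(M) = ∑ₜ ℓ_γ(⟨M, H_t⟩)` of `P_λ` is convex, because `ℓ_γ(x)` is the maximum over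
`a ∈ [0, 1]` of the affine functions `a (1 - x) - γ a² / 2`. Hence `P_λ = L + (λ/2)‖·‖²` is
`λ`-strongly convex, and its minimiser `M_λ` over the convex cone of PSD matrices satisfies
`P_λ(M_λ) + (λ/2)‖M - M_λ‖² ≤ P_λ(M)` for every PSD `M`. Adding this for `(λ₀, M₁*)` and
`(λ₁, M₀*)` cancels the loss terms and leaves `λ₀‖M₀*‖² + λ₁‖M₁*‖² ≤ (λ₀ + λ₁)⟨M₀*, M₁*⟩`.
Expanding `‖M₁* - c M₀*‖²` with `c = (λ₀ + λ₁)/(2λ₁)` and inserting this inequality gives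
`λ₁‖M₁* - c M₀*‖² ≤ (λ₀ - λ₁)²/(4λ₁) ‖M₀*‖²`.
-/

open scoped BigOperators
open scoped Matrix

/-- Frobenius inner product ⟨A,B⟩ = tr(Aᵀ B). -/
noncomputable def frob {d : ℕ} (A B : Matrix (Fin d) (Fin d) ℝ) : ℝ :=
  Matrix.trace (Aᵀ * B)

/-- Frobenius norm ‖A‖_F = √⟨A,A⟩. -/
noncomputable def frobNorm {d : ℕ} (A : Matrix (Fin d) (Fin d) ℝ) : ℝ :=
  Real.sqrt (frob A A)

/-- Smoothed hinge loss ℓ_γ. -/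
noncomputable def shinge (γ x : ℝ) : ℝ :=
  if 1 < x then 0 else if 1 - γ ≤ x then (1 - x) ^ 2 / (2 * γ) else 1 - x - γ / 2

/-- Derivative of the smoothed hinge loss ℓ_γ'. -/
noncomputable def shinge' (γ x : ℝ) : ℝ :=
  if 1 < x then 0 else if 1 - γ ≤ x then -(1 - x) / γ else -1

/-- Primal objective P_λ(M) = Σ_t ℓ_γ(⟨M,H_t⟩) + (λ/2)‖M‖_F². -/
noncomputable def Pobj {d : ℕ} {ι : Type*} (γ lam : ℝ) (T : Finset ι)
    (H : ι → Matrix (Fin d) (Fin d) ℝ) (M : Matrix (Fin d) (Fin d) ℝ) : ℝ :=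
  (∑ t ∈ T, shinge γ (frob M (H t))) + lam / 2 * frobNorm M ^ 2

/-- Gradient ∇P_λ(M) = Σ_t ℓ_γ'(⟨M,H_t⟩) H_t + λ M. -/
noncomputable def gradP {d : ℕ} {ι : Type*} (γ lam : ℝ) (T : Finset ι)
    (H : ι → Matrix (Fin d) (Fin d) ℝ) (M : Matrix (Fin d) (Fin d) ℝ) :
    Matrix (Fin d) (Fin d) ℝ :=
  (∑ t ∈ T, shinge' γ (frob M (H t)) • H t) + lam • M

open Set Filter Topology
open scoped RealInnerProductSpace

theorem convexOn_finset_sum {𝕜 E β ι : Type*} [Semiring 𝕜] [PartialOrder 𝕜] [AddCommMonoid E]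
    [AddCommMonoid β] [PartialOrder β] [IsOrderedAddMonoid β] [SMul 𝕜 E] [Module 𝕜 β]
    {s : Set E} (hs : Convex 𝕜 s) (t : Finset ι) {f : ι → E → β}
    (hf : ∀ i ∈ t, ConvexOn 𝕜 s (f i)) : ConvexOn 𝕜 s fun x => ∑ i ∈ t, f i x := by
  classical
  induction t using Finset.induction_on with
  | empty => simpa using convexOn_const 0 hs
  | insert i t hi ih =>
    simp_rw [Finset.sum_insert hi]
    exact (hf i (Finset.mem_insert_self i t)).add
      (ih fun j hj => hf j (Finset.mem_insert_of_mem hj))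

theorem StrongConvexOn.add_sq_norm_sub_le_of_isMinOn {E : Type*} [NormedAddCommGroup E]
    [NormedSpace ℝ E] {s : Set E} {m : ℝ} {f : E → ℝ} {x y : E} (hf : StrongConvexOn s m f)
    (hmin : IsMinOn f s x) (hx : x ∈ s) (hy : y ∈ s) :
    f x + m / 2 * ‖y - x‖ ^ 2 ≤ f y := by
  have hseg : ∀ t ∈ Ioo (0 : ℝ) 1, f x + (1 - t) * (m / 2 * ‖y - x‖ ^ 2) ≤ f y := by
    rintro t ⟨ht0, ht1⟩
    have hab : 1 - t + t = 1 := sub_add_cancel 1 t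
    have hconv := hf.2 hx hy (sub_nonneg.2 ht1.le) ht0.le hab
    have hle : f x ≤ f ((1 - t) • x + t • y) :=
      hmin (hf.1 hx hy (sub_nonneg.2 ht1.le) ht0.le hab)
    rw [norm_sub_rev, smul_eq_mul, smul_eq_mul] at hconv
    refine le_of_mul_le_mul_left ?_ ht0
    linear_combination hle + hconv
  have hlim : Tendsto (fun t : ℝ => f x + (1 - t) * (m / 2 * ‖y - x‖ ^ 2)) (𝓝[>] 0)
      (𝓝 (f x + m / 2 * ‖y - x‖ ^ 2)) := by
    refine (Continuous.tendsto' ?_ 0 _ (by simp)).mono_left nhdsWithin_le_nhds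
    fun_prop
  exact le_of_tendsto hlim (eventually_of_mem (Ioo_mem_nhdsGT one_pos) hseg)

section InnerProductSpace

variable {E : Type*} [NormedAddCommGroup E] [InnerProductSpace ℝ E] {s : Set E} {L : E → ℝ}
  {lam₀ lam₁ : ℝ} {x₀ x₁ : E}

theorem ConvexOn.strongConvexOn_add_sq_norm (hL : ConvexOn ℝ s L) (m : ℝ) :
    StrongConvexOn s m fun x => L x + m / 2 * ‖x‖ ^ 2 :=
  strongConvexOn_iff_convex.2 (by simpa using hL)

theorem ConvexOn.mul_norm_sq_add_mul_norm_sq_le_inner_of_isMinOn (hL : ConvexOn ℝ s L)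
    (hx₀ : x₀ ∈ s) (hx₁ : x₁ ∈ s)
    (h₀ : IsMinOn (fun x => L x + lam₀ / 2 * ‖x‖ ^ 2) s x₀)
    (h₁ : IsMinOn (fun x => L x + lam₁ / 2 * ‖x‖ ^ 2) s x₁) :
    lam₀ * ‖x₀‖ ^ 2 + lam₁ * ‖x₁‖ ^ 2 ≤ (lam₀ + lam₁) * ⟪x₀, x₁⟫ := by
  have e₀ := (hL.strongConvexOn_add_sq_norm lam₀).add_sq_norm_sub_le_of_isMinOn h₀ hx₀ hx₁
  have e₁ := (hL.strongConvexOn_add_sq_norm lam₁).add_sq_norm_sub_le_of_isMinOn h₁ hx₁ hx₀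
  rw [norm_sub_sq_real] at e₀ e₁
  rw [real_inner_comm] at e₀
  linarith

theorem norm_sub_smul_le_of_mul_norm_sq_add_mul_norm_sq_le_inner (hlam₁ : 0 < lam₁)
    (h : lam₀ * ‖x₀‖ ^ 2 + lam₁ * ‖x₁‖ ^ 2 ≤ (lam₀ + lam₁) * ⟪x₀, x₁⟫) :
    ‖x₁ - ((lam₀ + lam₁) / (2 * lam₁)) • x₀‖ ≤ |lam₀ - lam₁| / (2 * lam₁) * ‖x₀‖ := by
  refine le_of_sq_le_sq ?_ (by positivity)
  rw [norm_sub_sq_real, norm_smul, inner_smul_right, real_inner_comm, mul_pow, mul_pow, div_pow,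
    sq_abs, Real.norm_eq_abs, sq_abs]
  field_simp
  nlinarith [mul_le_mul_of_nonneg_left h (by positivity : 0 ≤ 4 * lam₁)]

end InnerProductSpace

theorem isGreatest_shinge {γ : ℝ} (hγ : 0 < γ) (x : ℝ) :
    IsGreatest ((fun a => a * (1 - x) - γ * a ^ 2 / 2) '' Icc 0 1) (shinge γ x) := by
  constructor
  · unfold shinge
    split_ifs with h₁ h₂
    · exact ⟨0, by simp, by simp⟩
    · refine ⟨(1 - x) / γ, ⟨by bound, (div_le_one₀ hγ).2 (by linarith)⟩, ?_⟩
      field_simp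
      ring
    · exact ⟨1, by simp, by ring⟩
  · rintro _ ⟨a, ⟨ha₀, ha₁⟩, rfl⟩
    dsimp only
    unfold shinge
    split_ifs with h₁ h₂
    · nlinarith [mul_nonneg ha₀ (sub_nonneg.2 h₁.le), sq_nonneg a]
    · rw [le_div_iff₀ (by positivity)]
      nlinarith [sq_nonneg (1 - x - γ * a)]
    · have : 0 ≤ 1 - x - γ * (1 + a) / 2 := by nlinarith
      nlinarith [mul_nonneg (sub_nonneg.2 ha₁) this]

theorem convexOn_shinge {γ : ℝ} (hγ : 0 < γ) : ConvexOn ℝ univ (shinge γ) := by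
  refine ⟨convex_univ, fun x _ y _ a b ha hb hab => ?_⟩
  obtain rfl : b = 1 - a := by linarith
  obtain ⟨c, hc, hc_eq⟩ := (isGreatest_shinge hγ (a • x + (1 - a) • y)).1
  have hx := mul_le_mul_of_nonneg_left ((isGreatest_shinge hγ x).2 (mem_image_of_mem _ hc)) ha
  have hy := mul_le_mul_of_nonneg_left ((isGreatest_shinge hγ y).2 (mem_image_of_mem _ hc)) hb
  rw [← hc_eq]
  simp only [smul_eq_mul] at hx hy ⊢
  linear_combination hx + hy

section SmoothHingeLoss

variable {E ι : Type*} [NormedAddCommGroup E] [InnerProductSpace ℝ E]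

noncomputable def smoothHingeLoss (γ : ℝ) (T : Finset ι) (h : ι → E) (v : E) : ℝ :=
  ∑ t ∈ T, shinge γ ⟪v, h t⟫

theorem convexOn_smoothHingeLoss {γ : ℝ} (hγ : 0 < γ) (T : Finset ι) (h : ι → E) :
    ConvexOn ℝ univ (smoothHingeLoss γ T h) :=
  convexOn_finset_sum convex_univ T fun t _ => by
    simpa [Function.comp_def, real_inner_comm] using
      (convexOn_shinge hγ).comp_linearMap (innerSL ℝ (h t) : E →ₗ[ℝ] ℝ)

end SmoothHingeLoss

noncomputable def Matrix.vecLin {m n : Type*} : Matrix m n ℝ →ₗ[ℝ] EuclideanSpace ℝ (n × m) where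
  toFun A := WithLp.toLp 2 A.vec
  map_add' _ _ := rfl
  map_smul' _ _ := rfl

theorem frob_eq_inner {d : ℕ} (A B : Matrix (Fin d) (Fin d) ℝ) :
    frob A B = ⟪Matrix.vecLin A, Matrix.vecLin B⟫ := by
  rw [frob, ← Matrix.vec_dotProduct_vec]
  exact dotProduct_comm _ _

theorem frobNorm_eq_norm {d : ℕ} (A : Matrix (Fin d) (Fin d) ℝ) :
    frobNorm A = ‖Matrix.vecLin A‖ := by
  rw [frobNorm, frob_eq_inner, real_inner_self_eq_norm_sq, Real.sqrt_sq (norm_nonneg _)]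

theorem Pobj_eq_smoothHingeLoss_add {d : ℕ} {ι : Type*} (γ lam : ℝ) (T : Finset ι)
    (H : ι → Matrix (Fin d) (Fin d) ℝ) (M : Matrix (Fin d) (Fin d) ℝ) :
    Pobj γ lam T H M = smoothHingeLoss γ T (Matrix.vecLin ∘ H) (Matrix.vecLin M) +
      lam / 2 * ‖Matrix.vecLin M‖ ^ 2 := by
  simp only [Pobj, smoothHingeLoss, frob_eq_inner, frobNorm_eq_norm, Function.comp_apply]

theorem Matrix.convex_setOf_posSemidef {n : Type*} [Fintype n] :
    Convex ℝ {A : Matrix n n ℝ | A.PosSemidef} :=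
  fun _ hA _ hB _ _ ha hb _ => (hA.smul ha).add (hB.smul hb)

theorem regularization_path_bound_general {d : ℕ} {ι : Type*} (γ lam0 lam1 : ℝ)
    (hγ : 0 < γ) (hlam1 : 0 < lam1)
    (T : Finset ι) (H : ι → Matrix (Fin d) (Fin d) ℝ)
    (M0star M1star : Matrix (Fin d) (Fin d) ℝ)
    (hM0 : M0star.PosSemidef)
    (hopt0 : ∀ M' : Matrix (Fin d) (Fin d) ℝ, M'.PosSemidef →
      Pobj γ lam0 T H M0star ≤ Pobj γ lam0 T H M')
    (hM1 : M1star.PosSemidef)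
    (hopt1 : ∀ M' : Matrix (Fin d) (Fin d) ℝ, M'.PosSemidef →
      Pobj γ lam1 T H M1star ≤ Pobj γ lam1 T H M') :
    frobNorm (M1star - ((lam0 + lam1) / (2 * lam1)) • M0star) ≤
      |lam0 - lam1| / (2 * lam1) * frobNorm M0star := by
  set s := Matrix.vecLin '' {M : Matrix (Fin d) (Fin d) ℝ | M.PosSemidef}
  set L := smoothHingeLoss γ T (Matrix.vecLin ∘ H)
  have hL : ConvexOn ℝ s L := (convexOn_smoothHingeLoss hγ T _).subset (subset_univ s)
    (Matrix.convex_setOf_posSemidef.linear_image _)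
  have hmin : ∀ lam Ms, (∀ M' : Matrix (Fin d) (Fin d) ℝ, M'.PosSemidef →
      Pobj γ lam T H Ms ≤ Pobj γ lam T H M') →
      IsMinOn (fun v => L v + lam / 2 * ‖v‖ ^ 2) s (Matrix.vecLin Ms) := by
    rintro lam Ms hopt _ ⟨M', hM', rfl⟩
    have := hopt M' hM'
    rwa [Pobj_eq_smoothHingeLoss_add, Pobj_eq_smoothHingeLoss_add] at this
  have key := hL.mul_norm_sq_add_mul_norm_sq_le_inner_of_isMinOn (mem_image_of_mem _ hM0)
    (mem_image_of_mem _ hM1) (hmin lam0 _ hopt0) (hmin lam1 _ hopt1)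
  simpa only [frobNorm_eq_norm, map_sub, map_smul] using
    norm_sub_smul_le_of_mul_norm_sq_add_mul_norm_sq_le_inner hlam1 key

/-- Regularization Path Bound (RPB). -/
theorem regularization_path_bound {d : ℕ} {ι : Type*} (γ lam0 lam1 : ℝ)
    (hγ : 0 < γ) (hγ1 : γ ≤ 1) (hlam0 : 0 < lam0) (hlam1 : 0 < lam1)
    (T : Finset ι) (H : ι → Matrix (Fin d) (Fin d) ℝ)
    (hH : ∀ t ∈ T, (H t).IsSymm)
    (M0star M1star : Matrix (Fin d) (Fin d) ℝ)
    (hM0 : M0star.PosSemidef)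
    (hopt0 : ∀ M' : Matrix (Fin d) (Fin d) ℝ, M'.PosSemidef →
      Pobj γ lam0 T H M0star ≤ Pobj γ lam0 T H M')
    (hM1 : M1star.PosSemidef)
    (hopt1 : ∀ M' : Matrix (Fin d) (Fin d) ℝ, M'.PosSemidef →
      Pobj γ lam1 T H M1star ≤ Pobj γ lam1 T H M') :
    frobNorm (M1star - ((lam0 + lam1) / (2 * lam1)) • M0star) ≤
      |lam0 - lam1| / (2 * lam1) * frobNorm M0star :=
  regularization_path_bound_general γ lam0 lam1 hγ hlam1 T H M0star M1star hM0 hopt0 hM1 hopt1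
end

section
/- (Relationship between PGB and RPB) Fix γ ∈ (0,1], a finite index set T, symmetric matrices H_t ∈ ℝ^{d×d} (t ∈ T), and λ₀, λ₁ > 0. Let M₀* be optimal for λ₀ (M₀* ⪰ O minimizes P_{λ₀} over positive semi-definite matrices) and set Q := M₀* − (1/(2λ₁))∇P_{λ₁}(M₀*). Then the PGB sphere for λ₁ with reference solution M₀* coincides with the RPB sphere: [Q]_+ = ((λ₀+λ₁)/(2λ₁))·M₀* and ((1/(2λ₁))‖∇P_{λ₁}(M₀*)‖_F)² − ‖[Q]_−‖_F² = ((λ₀−λ₁)²/(4λ₁²))·‖M₀*‖_F². -/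
open scoped BigOperators
open scoped Matrix

/-!
Optimality of `M₀*` over the positive semidefinite cone, combined with the quadratic upper
bound coming from the `1/γ`-smoothness of `ℓ_γ`, gives the variational inequality
`⟨G, X - M₀*⟩ ≥ 0` for all `X ⪰ O`, where `G = ∇P_{λ₀}(M₀*)`. Hence `G` lies in the dual cone
and `⟨G, M₀*⟩ = 0`. Since `∇P_{λ₁}(M₀*) = G + (λ₁ - λ₀) M₀*`, the matrix `Q` splits as
`((λ₀ + λ₁)/(2λ₁)) M₀* - G/(2λ₁)`, a positive semidefinite matrix plus an orthogonal element of
the polar cone; by uniqueness of Moreau's decomposition this is `[Q]_+ + [Q]_−`. The norm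
identity is then Pythagoras, again using `⟨G, M₀*⟩ = 0`.
-/

open Matrix

theorem shinge_add_le {γ : ℝ} (hγ : 0 < γ) (x h : ℝ) :
    shinge γ (x + h) ≤ shinge γ x + shinge' γ x * h + h ^ 2 / (2 * γ) := by
  rw [← sub_nonneg]
  unfold shinge shinge'
  split_ifs <;> field_simp <;> nlinarith

section

variable {d : ℕ}

theorem frob_comm (A B : Matrix (Fin d) (Fin d) ℝ) : frob A B = frob B A := by
  rw [frob, frob, ← trace_transpose, transpose_mul, transpose_transpose]

theorem frob_self_nonneg (A : Matrix (Fin d) (Fin d) ℝ) : 0 ≤ frob A A := by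
  simpa [frob] using (posSemidef_conjTranspose_mul_self A).trace_nonneg

theorem frob_self_eq_zero {A : Matrix (Fin d) (Fin d) ℝ} : frob A A = 0 ↔ A = 0 := by
  simpa [frob] using trace_conjTranspose_mul_self_eq_zero_iff (A := A)

open scoped MatrixOrder in
theorem Matrix.PosSemidef.frob_nonneg {A B : Matrix (Fin d) (Fin d) ℝ}
    (hA : A.PosSemidef) (hB : B.PosSemidef) : 0 ≤ frob A B := by
  obtain ⟨R, rfl⟩ := CStarAlgebra.nonneg_iff_eq_star_mul_self.mp hB.nonneg
  rw [frob, star_eq_conjTranspose, ← Matrix.mul_assoc, trace_mul_comm, ← Matrix.mul_assoc]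
  exact (hA.transpose.mul_mul_conjTranspose_same R).trace_nonneg

theorem frob_add_left (A B C : Matrix (Fin d) (Fin d) ℝ) :
    frob (A + B) C = frob A C + frob B C := by
  simp [frob, Matrix.add_mul]

theorem frob_sub_left (A B C : Matrix (Fin d) (Fin d) ℝ) :
    frob (A - B) C = frob A C - frob B C := by
  simp [frob, Matrix.sub_mul]

theorem frob_smul_left (c : ℝ) (A B : Matrix (Fin d) (Fin d) ℝ) :
    frob (c • A) B = c * frob A B := by
  simp [frob]

theorem frob_sum_left {ι : Type*} (T : Finset ι) (A : ι → Matrix (Fin d) (Fin d) ℝ)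
    (B : Matrix (Fin d) (Fin d) ℝ) : frob (∑ t ∈ T, A t) B = ∑ t ∈ T, frob (A t) B := by
  simp [frob, transpose_sum, Finset.sum_mul, trace_sum]

theorem frob_add_right (A B C : Matrix (Fin d) (Fin d) ℝ) :
    frob A (B + C) = frob A B + frob A C := by
  simp [frob, Matrix.mul_add]

theorem frob_sub_right (A B C : Matrix (Fin d) (Fin d) ℝ) :
    frob A (B - C) = frob A B - frob A C := by
  simp [frob, Matrix.mul_sub]

theorem frob_smul_right (c : ℝ) (A B : Matrix (Fin d) (Fin d) ℝ) :
    frob A (c • B) = c * frob A B := by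
  simp [frob]

theorem frob_neg_right (A B : Matrix (Fin d) (Fin d) ℝ) : frob A (-B) = -frob A B := by
  simp [frob]

theorem frobNorm_sq (A : Matrix (Fin d) (Fin d) ℝ) : frobNorm A ^ 2 = frob A A :=
  Real.sq_sqrt (frob_self_nonneg A)

/-- Uniqueness of Moreau's decomposition for the cone of positive semidefinite matrices. -/
theorem eq_of_add_eq_add_of_polar {P₁ N₁ P₂ N₂ : Matrix (Fin d) (Fin d) ℝ}
    (hP₁ : P₁.PosSemidef) (hP₂ : P₂.PosSemidef)
    (hN₁ : ∀ X : Matrix (Fin d) (Fin d) ℝ, X.PosSemidef → frob X N₁ ≤ 0)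
    (hN₂ : ∀ X : Matrix (Fin d) (Fin d) ℝ, X.PosSemidef → frob X N₂ ≤ 0)
    (h₁ : frob P₁ N₁ = 0) (h₂ : frob P₂ N₂ = 0) (h : P₁ + N₁ = P₂ + N₂) : P₁ = P₂ := by
  have hdiff : P₁ - P₂ = N₂ - N₁ := by rw [sub_eq_sub_iff_add_eq_add, h, add_comm]
  have hsq : frob (P₁ - P₂) (P₁ - P₂) ≤ 0 := by
    calc frob (P₁ - P₂) (P₁ - P₂) = frob (P₁ - P₂) (N₂ - N₁) := by rw [hdiff]
      _ = frob P₁ N₂ + frob P₂ N₁ := by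
          rw [frob_sub_left, frob_sub_right, frob_sub_right, h₁, h₂]; ring
      _ ≤ 0 := add_nonpos (hN₂ P₁ hP₁) (hN₁ P₂ hP₂)
  exact sub_eq_zero.mp (frob_self_eq_zero.mp (le_antisymm hsq (frob_self_nonneg _)))

open Filter Topology in
theorem nonneg_of_forall_mul_add_sq_mul_nonneg {g C : ℝ}
    (h : ∀ s : ℝ, 0 < s → s ≤ 1 → 0 ≤ s * g + s ^ 2 * C) : 0 ≤ g := by
  have hlim : Tendsto (fun s : ℝ => g + s * C) (𝓝[>] 0) (𝓝 g) := by
    have : Continuous fun s : ℝ => g + s * C := by fun_prop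
    simpa using (this.tendsto 0).mono_left nhdsWithin_le_nhds
  refine ge_of_tendsto hlim ?_
  filter_upwards [Ioc_mem_nhdsGT one_pos] with s ⟨hs, hs1⟩
  exact nonneg_of_mul_nonneg_right (by linarith [h s hs hs1]) hs

theorem Pobj_add_le {ι : Type*} {γ : ℝ} (hγ : 0 < γ) (lam : ℝ) (T : Finset ι)
    (H : ι → Matrix (Fin d) (Fin d) ℝ) (M E : Matrix (Fin d) (Fin d) ℝ) :
    Pobj γ lam T H (M + E) ≤ Pobj γ lam T H M + frob (gradP γ lam T H M) E
      + ((∑ t ∈ T, frob E (H t) ^ 2 / (2 * γ)) + lam / 2 * frob E E) := by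
  have hloss : ∑ t ∈ T, shinge γ (frob (M + E) (H t)) ≤ ∑ t ∈ T,
      (shinge γ (frob M (H t)) + shinge' γ (frob M (H t)) * frob E (H t)
        + frob E (H t) ^ 2 / (2 * γ)) :=
    Finset.sum_le_sum fun t _ => frob_add_left M E (H t) ▸ shinge_add_le hγ _ _
  have hgrad : frob (gradP γ lam T H M) E
      = ∑ t ∈ T, shinge' γ (frob M (H t)) * frob E (H t) + lam * frob M E := by
    simp only [gradP, frob_add_left, frob_sum_left, frob_smul_left, frob_comm (H _) E]
  simp only [Pobj, frobNorm_sq, hgrad, frob_add_left, frob_add_right, frob_comm E M,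
    Finset.sum_add_distrib] at hloss ⊢
  linarith

theorem frob_gradP_sub_nonneg_of_isMinOn {ι : Type*} {γ : ℝ} (hγ : 0 < γ) {lam : ℝ}
    {T : Finset ι} {H : ι → Matrix (Fin d) (Fin d) ℝ} {M : Matrix (Fin d) (Fin d) ℝ}
    (hM : M.PosSemidef) (hopt : IsMinOn (Pobj γ lam T H) {M' | M'.PosSemidef} M)
    (X : Matrix (Fin d) (Fin d) ℝ) (hX : X.PosSemidef) :
    0 ≤ frob (gradP γ lam T H M) (X - M) := by
  set D := X - M
  refine nonneg_of_forall_mul_add_sq_mul_nonneg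
    (C := (∑ t ∈ T, frob D (H t) ^ 2 / (2 * γ)) + lam / 2 * frob D D) fun s hs hs1 => ?_
  have hconvex : (M + s • D).PosSemidef := by
    rw [show M + s • D = (1 - s) • M + s • X by simp only [D, smul_sub, sub_smul, one_smul]; abel]
    exact (hM.smul (sub_nonneg.mpr hs1)).add (hX.smul hs.le)
  have := (isMinOn_iff.mp hopt _ hconvex).trans (Pobj_add_le hγ lam T H M (s • D))
  simp only [frob_smul_left, frob_smul_right, mul_pow, mul_div_assoc, ← Finset.mul_sum] at this
  linarith

section VariationalInequality

variable {G M : Matrix (Fin d) (Fin d) ℝ} (hM : M.PosSemidef)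
  (hvar : ∀ X : Matrix (Fin d) (Fin d) ℝ, X.PosSemidef → 0 ≤ frob G (X - M))
include hM hvar

theorem frob_eq_zero_of_forall_frob_sub_nonneg : frob G M = 0 := by
  have h0 := hvar 0 PosSemidef.zero
  have h2 := hvar (M + M) (hM.add hM)
  rw [zero_sub, frob_neg_right] at h0
  rw [add_sub_cancel_right] at h2
  linarith

theorem frob_nonneg_of_forall_frob_sub_nonneg {X : Matrix (Fin d) (Fin d) ℝ}
    (hX : X.PosSemidef) : 0 ≤ frob G X := by
  simpa [frob_sub_right, frob_eq_zero_of_forall_frob_sub_nonneg hM hvar] using hvar X hX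

end VariationalInequality

theorem gradP_eq_gradP_add_smul {ι : Type*} (γ lam₀ lam₁ : ℝ) (T : Finset ι)
    (H : ι → Matrix (Fin d) (Fin d) ℝ) (M : Matrix (Fin d) (Fin d) ℝ) :
    gradP γ lam₁ T H M = gradP γ lam₀ T H M + (lam₁ - lam₀) • M := by
  simp only [gradP, sub_smul]
  abel

end

/-- `Qplus = [Q]_+` and `Qminus = [Q]_−` are given through the unique orthogonal PSD/NSD
decomposition of `Q = M₀* − (1/(2λ₁))∇P_{λ₁}(M₀*)`. -/
theorem pgb_eq_rpb_general {d : ℕ} {ι : Type*} (γ lam0 lam1 : ℝ)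
    (hγ : 0 < γ) (hlam0 : 0 < lam0) (hlam1 : 0 < lam1)
    (T : Finset ι) (H : ι → Matrix (Fin d) (Fin d) ℝ)
    (M0star Qplus Qminus : Matrix (Fin d) (Fin d) ℝ)
    (hM0 : M0star.PosSemidef)
    (hopt0 : ∀ M' : Matrix (Fin d) (Fin d) ℝ, M'.PosSemidef →
      Pobj γ lam0 T H M0star ≤ Pobj γ lam0 T H M')
    (hdecomp : M0star - (1 / (2 * lam1)) • gradP γ lam1 T H M0star = Qplus + Qminus)
    (hplus : Qplus.PosSemidef) (hminus : (-Qminus).PosSemidef)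
    (horth : frob Qplus Qminus = 0) :
    Qplus = ((lam0 + lam1) / (2 * lam1)) • M0star ∧
    ((1 / (2 * lam1)) * frobNorm (gradP γ lam1 T H M0star)) ^ 2 -
        frobNorm Qminus ^ 2 =
      (lam0 - lam1) ^ 2 / (4 * lam1 ^ 2) * frobNorm M0star ^ 2 := by
  have hvar := frob_gradP_sub_nonneg_of_isMinOn hγ hM0 (isMinOn_iff.mpr hopt0)
  have hGM := frob_eq_zero_of_forall_frob_sub_nonneg hM0 hvar
  have hgrad := gradP_eq_gradP_add_smul γ lam0 lam1 T H M0star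
  set G := gradP γ lam0 T H M0star
  have hQ : Qplus + Qminus = ((lam0 + lam1) / (2 * lam1)) • M0star + (-(1 / (2 * lam1))) • G := by
    rw [← hdecomp, hgrad]
    match_scalars
    · field_simp
      ring
    · ring
  have hQplus : Qplus = ((lam0 + lam1) / (2 * lam1)) • M0star := by
    refine eq_of_add_eq_add_of_polar hplus (hM0.smul (by positivity)) (fun X hX => ?_)
      (fun X hX => ?_) horth ?_ hQ
    · linarith [frob_neg_right X Qminus ▸ hX.frob_nonneg hminus]
    · rw [frob_smul_right, frob_comm]
      exact mul_nonpos_of_nonpos_of_nonneg (neg_nonpos.mpr (by positivity))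
        (frob_nonneg_of_forall_frob_sub_nonneg hM0 hvar hX)
    · rw [frob_smul_left, frob_smul_right, frob_comm, hGM, mul_zero, mul_zero]
  refine ⟨hQplus, ?_⟩
  have hQminus : Qminus = (-(1 / (2 * lam1))) • G := by
    rw [hQplus] at hQ; exact add_left_cancel hQ
  rw [mul_pow, frobNorm_sq, frobNorm_sq, frobNorm_sq, hQminus, hgrad]
  simp only [frob_add_left, frob_add_right, frob_smul_left, frob_smul_right, frob_comm M0star G,
    hGM]
  field_simp
  ring

/-- Relationship between PGB and RPB: the PGB sphere for λ₁ with the optimal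
solution for λ₀ as reference coincides with the RPB sphere.  Here
Qplus = [Q]_+ and Qminus = [Q]_− are given through the unique orthogonal
PSD/NSD decomposition of Q = M₀* − (1/(2λ₁))∇P_{λ₁}(M₀*). -/
theorem pgb_eq_rpb {d : ℕ} {ι : Type*} (γ lam0 lam1 : ℝ)
    (hγ : 0 < γ) (hγ1 : γ ≤ 1) (hlam0 : 0 < lam0) (hlam1 : 0 < lam1)
    (T : Finset ι) (H : ι → Matrix (Fin d) (Fin d) ℝ)
    (hH : ∀ t ∈ T, (H t).IsSymm)
    (M0star Qplus Qminus : Matrix (Fin d) (Fin d) ℝ)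
    (hM0 : M0star.PosSemidef)
    (hopt0 : ∀ M' : Matrix (Fin d) (Fin d) ℝ, M'.PosSemidef →
      Pobj γ lam0 T H M0star ≤ Pobj γ lam0 T H M')
    (hdecomp : M0star - (1 / (2 * lam1)) • gradP γ lam1 T H M0star = Qplus + Qminus)
    (hplus : Qplus.PosSemidef) (hminus : (-Qminus).PosSemidef)
    (horth : frob Qplus Qminus = 0) :
    Qplus = ((lam0 + lam1) / (2 * lam1)) • M0star ∧
    ((1 / (2 * lam1)) * frobNorm (gradP γ lam1 T H M0star)) ^ 2 -
        frobNorm Qminus ^ 2 =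
      (lam0 - lam1) ^ 2 / (4 * lam1 ^ 2) * frobNorm M0star ^ 2 :=
  pgb_eq_rpb_general γ lam0 lam1 hγ hlam0 hlam1 T H M0star Qplus Qminus hM0 hopt0 hdecomp hplus
    hminus horth
end
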